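/- Let g : {−1,1}^{m₁} × {−1,1}^{m₂} → {−1,1} be a balanced gadget, and let k ≥ 1, d ≥ 0, D ≥ 0, n ≥ 1 and B ≥ 0. Assume: (i) for every randomized protocol C on ({−1,1}^{m₁})^n × ({−1,1}^{m₂})^n with communication cost at most d, there exists a randomized decision tree T of depth at most D on {−1,1}^n with |T(z) − C_{↓g}(z)| ≤ n^{−k} for all z ∈ {−1,1}^n; and (ii) every randomized decision tree of depth at most D on {−1,1}^n satisfies L_{1,k}(T) ≤ B. Then every randomized protocol C' on {−1,1}^n × {−1,1}^n with communication cost at most d satisfies L_{1,k}(C'_{↓XOR}) ≤ (max_{S,T} |ĝ(S,T)|)^{−k}·(B + binom(n,k)·n^{−k}). -/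

import Mathlib

open MeasureTheory ProbabilityTheory Finset Real

noncomputable section

/-- Sign encoding of a Boolean: `false ↦ 1`, `true ↦ -1`.
Note `sgnb (xor a b) = sgnb a * sgnb b`. -/
def sgnb (b : Bool) : ℝ := if b then -1 else 1

/-- Fourier coefficient of `f : {-1,1}^n → ℝ` at `S ⊆ [n]`:
`f̂(S) = 2^{-n} ∑_z f(z) ∏_{i∈S} z_i`. -/
def bFourier {n : ℕ} (f : (Fin n → Bool) → ℝ) (S : Finset (Fin n)) : ℝ :=
  ((2 : ℝ) ^ n)⁻¹ * ∑ z : Fin n → Bool, f z * ∏ i ∈ S, sgnb (z i)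

/-- Level-`k` Fourier weight `L_{1,k}(f) = ∑_{|S|=k} |f̂(S)|`. -/
def levelWeight {n : ℕ} (f : (Fin n → Bool) → ℝ) (k : ℕ) : ℝ :=
  ∑ S ∈ Finset.univ.filter (fun S : Finset (Fin n) => S.card = k), |bFourier f S|

/-- Deterministic two-party communication protocol on `A × B`: a rooted binary
tree where each internal node is owned by one of the players and labeled by a
function of that player's input selecting a child, and each leaf is labeled by
an output in `{-1,1}` (encoded as a `Bool`). -/
inductive Protocol (A B : Type) : Type
  | leaf (out : Bool) : Protocol A B
  | nodeA (next : A → Bool) (l r : Protocol A B) : Protocol A B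
  | nodeB (next : B → Bool) (l r : Protocol A B) : Protocol A B

namespace Protocol

/-- Depth (= communication cost) of a protocol. -/
def depth {A B : Type} : Protocol A B → ℕ
  | leaf _ => 0
  | nodeA _ l r => max (depth l) (depth r) + 1
  | nodeB _ l r => max (depth l) (depth r) + 1

/-- The `±1` output of a protocol on a given input pair. -/
def eval {A B : Type} : Protocol A B → A → B → ℝ
  | leaf o, _, _ => sgnb o
  | nodeA f l r, a, b => if f a then eval r a b else eval l a b
  | nodeB f l r, a, b => if f b then eval r a b else eval l a b

end Protocol

/-- Value of a randomized protocol: a finitely supported convex combination of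
deterministic protocols, evaluated as the expected output. -/
def rvalue {A B ι : Type} [Fintype ι] (p : ι → ℝ) (P : ι → Protocol A B)
    (a : A) (b : B) : ℝ :=
  ∑ i, p i * (P i).eval a b

/-- XOR-fiber of `C : {-1,1}^n × {-1,1}^n → ℝ`:
`h(z) = 2^{-n} ∑_x C(x, x ⊙ z)`. -/
def xorFiber {n : ℕ} (C : (Fin n → Bool) → (Fin n → Bool) → ℝ) (z : Fin n → Bool) : ℝ :=
  ((2 : ℝ) ^ n)⁻¹ * ∑ x : Fin n → Bool, C x (fun i => xor (x i) (z i))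

/-- Two-party Fourier coefficient of a gadget `g : {-1,1}^{m₁} × {-1,1}^{m₂} → {-1,1}`:
`ĝ(S,T) = E_{x,y}[g(x,y)·x_S·y_T]`. -/
def gFourier {m₁ m₂ : ℕ} (g : (Fin m₁ → Bool) → (Fin m₂ → Bool) → Bool)
    (S : Finset (Fin m₁)) (T : Finset (Fin m₂)) : ℝ :=
  ((2 : ℝ) ^ m₁ * (2 : ℝ) ^ m₂)⁻¹ *
    ∑ x : Fin m₁ → Bool, ∑ y : Fin m₂ → Bool,
      sgnb (g x y) * (∏ i ∈ S, sgnb (x i)) * ∏ j ∈ T, sgnb (y j)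

/-- A gadget is balanced if `ĝ(S,T) = 0` whenever `S = ∅` or `T = ∅`. -/
def BalancedGadget {m₁ m₂ : ℕ} (g : (Fin m₁ → Bool) → (Fin m₂ → Bool) → Bool) : Prop :=
  ∀ S T, (S = ∅ ∨ T = ∅) → gFourier g S T = 0

/-- `g`-fiber of `C : ({-1,1}^{m₁})^n × ({-1,1}^{m₂})^n → ℝ`:
`C_{↓g}(z) = E[C(x,y) ∣ g(xᵢ,yᵢ) = zᵢ ∀i]`, the conditional expectation over
independent uniform `x, y`. -/
def gFiber {n m₁ m₂ : ℕ} (g : (Fin m₁ → Bool) → (Fin m₂ → Bool) → Bool)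
    (C : (Fin n → Fin m₁ → Bool) → (Fin n → Fin m₂ → Bool) → ℝ)
    (z : Fin n → Bool) : ℝ :=
  (∑ x : Fin n → Fin m₁ → Bool, ∑ y : Fin n → Fin m₂ → Bool,
      if ∀ i, g (x i) (y i) = z i then C x y else 0) /
    ((Finset.univ.filter
      (fun q : (Fin n → Fin m₁ → Bool) × (Fin n → Fin m₂ → Bool) =>
        ∀ i, g (q.1 i) (q.2 i) = z i)).card : ℝ)

/-- Deterministic decision tree on `{-1,1}^n`: internal nodes query a
coordinate and route to a child according to its value; leaves hold real
outputs (required to lie in `[-1,1]` via `DTree.boundedLeaves`). -/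
inductive DTree (n : ℕ) : Type
  | leaf (out : ℝ) : DTree n
  | node (i : Fin n) (l r : DTree n) : DTree n

namespace DTree

/-- Depth of a decision tree. -/
def depth {n : ℕ} : DTree n → ℕ
  | leaf _ => 0
  | node _ l r => max (depth l) (depth r) + 1

/-- Output of a decision tree on an input. -/
def eval {n : ℕ} : DTree n → (Fin n → Bool) → ℝ
  | leaf o, _ => o
  | node i l r, z => if z i then eval r z else eval l z

/-- All leaf values lie in `[-1,1]`. -/
def boundedLeaves {n : ℕ} : DTree n → Prop
  | leaf o => |o| ≤ 1
  | node _ l r => boundedLeaves l ∧ boundedLeaves r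

end DTree

lemma sgnb_cases (b : Bool) : sgnb b = 1 ∨ sgnb b = -1 := by cases b <;> simp [sgnb]
lemma sgnb_sq (b : Bool) : sgnb b * sgnb b = 1 := by cases b <;> norm_num [sgnb]
lemma abs_sgnb (b : Bool) : |sgnb b| = 1 := by cases b <;> norm_num [sgnb]
lemma sgnb_xor (a b : Bool) : sgnb (xor a b) = sgnb a * sgnb b := by
  cases a <;> cases b <;> norm_num [sgnb]
lemma sgnb_ne_zero (b : Bool) : sgnb b ≠ 0 := by cases b <;> norm_num [sgnb]

def chi {n : ℕ} (S : Finset (Fin n)) (x : Fin n → Bool) : ℝ := ∏ i ∈ S, sgnb (x i)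

lemma chi_cases {n : ℕ} (S : Finset (Fin n)) (x : Fin n → Bool) : chi S x = 1 ∨ chi S x = -1 := by
  unfold chi
  induction S using Finset.cons_induction with
  | empty => simp
  | cons i s hi ih =>
    rw [Finset.prod_cons]
    rcases ih with h | h <;> rcases sgnb_cases (x i) with h2 | h2 <;> rw [h, h2] <;> norm_num

lemma abs_chi {n : ℕ} (S : Finset (Fin n)) (x : Fin n → Bool) : |chi S x| = 1 := by
  rcases chi_cases S x with h | h <;> rw [h] <;> norm_num

lemma chi_sq {n : ℕ} (S : Finset (Fin n)) (x : Fin n → Bool) : chi S x * chi S x = 1 := by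
  rcases chi_cases S x with h | h <;> rw [h] <;> norm_num

lemma sum_fun_prod {n : ℕ} {X : Type} [Fintype X] [DecidableEq X] (f : Fin n → X → ℝ) :
    ∑ x : Fin n → X, ∏ i, f i (x i) = ∏ i, ∑ a : X, f i a := by
  rw [Finset.prod_univ_sum (fun _ => (univ : Finset X)) f, Fintype.piFinset_univ]

lemma chi_as_univ_prod {n : ℕ} (S : Finset (Fin n)) (x : Fin n → Bool) :
    chi S x = ∏ i, (if i ∈ S then sgnb (x i) else 1) := by
  rw [chi, ← Finset.prod_filter]
  congr 1
  simp [Finset.filter_mem_eq_inter]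

lemma sum_chi_eq_zero {n : ℕ} {S : Finset (Fin n)} (hS : S.Nonempty) :
    ∑ x : Fin n → Bool, chi S x = 0 := by
  simp_rw [chi_as_univ_prod]
  rw [sum_fun_prod (fun i b => if i ∈ S then sgnb b else 1)]
  obtain ⟨i0, hi0⟩ := hS
  apply Finset.prod_eq_zero (Finset.mem_univ i0)
  simp [hi0, sgnb]

lemma sum_chi_chi_dual {n : ℕ} (w z : Fin n → Bool) :
    ∑ S : Finset (Fin n), chi S w * chi S z = if w = z then (2:ℝ)^n else 0 := by
  have h1 : ∀ S : Finset (Fin n), chi S w * chi S z = ∏ i ∈ S, (sgnb (w i) * sgnb (z i)) := by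
    intro S; rw [chi, chi, Finset.prod_mul_distrib]
  simp_rw [h1]
  have h2 : ∑ S : Finset (Fin n), ∏ i ∈ S, (sgnb (w i) * sgnb (z i))
      = ∏ i, (sgnb (w i) * sgnb (z i) + 1) := by
    rw [Finset.prod_add]
    simp [Finset.powerset_univ]
  rw [h2]
  by_cases h : w = z
  · subst h
    simp only [if_pos rfl]
    rw [Finset.prod_congr rfl (fun i _ => by rw [sgnb_sq])]
    norm_num
  · rw [if_neg h]
    obtain ⟨i0, hi0⟩ : ∃ i, w i ≠ z i := by
      by_contra hc; push_neg at hc; exact h (funext hc)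
    apply Finset.prod_eq_zero (Finset.mem_univ i0)
    rcases Bool.eq_false_or_eq_true (w i0) with h1 | h1 <;>
      rcases Bool.eq_false_or_eq_true (z i0) with h2 | h2 <;>
      simp_all [sgnb]

lemma sum4_swap {α β γ δ : Type*} [Fintype α] [Fintype β] [Fintype γ] [Fintype δ]
    (f : α → β → γ → δ → ℝ) :
    ∑ a, ∑ b, ∑ c, ∑ d, f a b c d = ∑ c, ∑ d, ∑ a, ∑ b, f a b c d := by
  calc ∑ a, ∑ b, ∑ c, ∑ d, f a b c d
      = ∑ a, ∑ c, ∑ b, ∑ d, f a b c d :=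
        Finset.sum_congr rfl fun a _ => Finset.sum_comm
    _ = ∑ c, ∑ a, ∑ b, ∑ d, f a b c d := Finset.sum_comm
    _ = ∑ c, ∑ a, ∑ d, ∑ b, f a b c d :=
        Finset.sum_congr rfl fun c _ => Finset.sum_congr rfl fun a _ => Finset.sum_comm
    _ = ∑ c, ∑ d, ∑ a, ∑ b, f a b c d :=
        Finset.sum_congr rfl fun c _ => Finset.sum_comm

lemma inversion_at {m₁ m₂ : ℕ} (g : (Fin m₁ → Bool) → (Fin m₂ → Bool) → Bool)
    (x₀ : Fin m₁ → Bool) (y₀ : Fin m₂ → Bool) :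
    ∑ S : Finset (Fin m₁), ∑ T : Finset (Fin m₂),
      gFourier g S T * chi S x₀ * chi T y₀ = sgnb (g x₀ y₀) := by
  have h1 : ∀ (S : Finset (Fin m₁)) (T : Finset (Fin m₂)),
      gFourier g S T * chi S x₀ * chi T y₀
        = ∑ x : Fin m₁ → Bool, ∑ y : Fin m₂ → Bool,
            ((2:ℝ)^m₁ * (2:ℝ)^m₂)⁻¹ * sgnb (g x y)
              * ((chi S x * chi S x₀) * (chi T y * chi T y₀)) := by
    intro S T
    rw [gFourier, Finset.mul_sum, Finset.sum_mul, Finset.sum_mul]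
    apply Finset.sum_congr rfl; intro x _
    rw [Finset.mul_sum, Finset.sum_mul, Finset.sum_mul]
    apply Finset.sum_congr rfl; intro y _
    show ((2:ℝ)^m₁*(2:ℝ)^m₂)⁻¹ * (sgnb (g x y) * chi S x * chi T y) * chi S x₀ * chi T y₀ = _
    ring
  simp_rw [h1]
  rw [sum4_swap]
  have h2 : ∀ (x : Fin m₁ → Bool) (y : Fin m₂ → Bool),
      ∑ S : Finset (Fin m₁), ∑ T : Finset (Fin m₂),
        ((2:ℝ)^m₁ * (2:ℝ)^m₂)⁻¹ * sgnb (g x y) * ((chi S x * chi S x₀) * (chi T y * chi T y₀))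
      = ((2:ℝ)^m₁ * (2:ℝ)^m₂)⁻¹ * sgnb (g x y) *
          ((if x = x₀ then (2:ℝ)^m₁ else 0) * (if y = y₀ then (2:ℝ)^m₂ else 0)) := by
    intro x y
    rw [← sum_chi_chi_dual x x₀, ← sum_chi_chi_dual y y₀]
    rw [Finset.sum_mul_sum]
    rw [Finset.mul_sum]
    apply Finset.sum_congr rfl; intro S _
    rw [Finset.mul_sum]
  simp_rw [h2]
  simp only [mul_ite, ite_mul, mul_zero, zero_mul, Finset.sum_ite_eq', Finset.mem_univ, if_true]
  have : ((2:ℝ)^m₁ * (2:ℝ)^m₂) ≠ 0 := by positivity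
  field_simp

lemma exists_gFourier_ne_zero {m₁ m₂ : ℕ} (g : (Fin m₁ → Bool) → (Fin m₂ → Bool) → Bool) :
    ∃ S T, gFourier g S T ≠ 0 := by
  by_contra hc
  push_neg at hc
  have := inversion_at g (fun _ => false) (fun _ => false)
  simp only [hc, zero_mul, Finset.sum_const_zero] at this
  exact sgnb_ne_zero _ this.symm

lemma chi_empty {n : ℕ} (x : Fin n → Bool) : chi (∅ : Finset (Fin n)) x = 1 := by
  simp [chi]

lemma gFourier_sum {m₁ m₂ : ℕ} (g : (Fin m₁ → Bool) → (Fin m₂ → Bool) → Bool)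
    (S : Finset (Fin m₁)) (T : Finset (Fin m₂)) :
    ∑ x : Fin m₁ → Bool, ∑ y : Fin m₂ → Bool, sgnb (g x y) * chi S x * chi T y
      = (2:ℝ)^m₁ * (2:ℝ)^m₂ * gFourier g S T := by
  rw [gFourier, ← mul_assoc, mul_inv_cancel₀ (by positivity), one_mul]
  rfl

def pchi {n : ℕ} (S : Finset (Fin n)) (x : Fin n → Bool) : Bool := decide (chi S x = -1)

lemma sgnb_pchi {n : ℕ} (S : Finset (Fin n)) (x : Fin n → Bool) :
    sgnb (pchi S x) = chi S x := by
  rcases chi_cases S x with h | h <;> norm_num [pchi, sgnb, h]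

lemma ind_pchi {n : ℕ} (S : Finset (Fin n)) (x : Fin n → Bool) (α : Bool) :
    (if pchi S x = α then (1:ℝ) else 0) = (1 + sgnb α * chi S x) / 2 := by
  rw [← sgnb_pchi]
  rcases Bool.eq_false_or_eq_true (pchi S x) with h | h <;> cases α <;>
    simp [h, sgnb] <;> norm_num

lemma coord_sum {m₁ m₂ : ℕ} {g : (Fin m₁ → Bool) → (Fin m₂ → Bool) → Bool}
    (hg : BalancedGadget g) {S : Finset (Fin m₁)} {T : Finset (Fin m₂)}
    (hS : S.Nonempty) (hT : T.Nonempty) (α β : Bool) (c : Prop) [Decidable c] :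
    ∑ u : Fin m₁ → Bool, ∑ v : Fin m₂ → Bool,
      (if pchi S u = α then (1:ℝ) else 0) * (if pchi T v = β then (1:ℝ) else 0) *
        (if c then sgnb (g u v) else 1)
    = (2:ℝ)^m₁ * (2:ℝ)^m₂ / 4 * (if c then sgnb α * sgnb β * gFourier g S T else 1) := by
  by_cases hc : c
  · simp only [if_pos hc]
    have step : ∀ (u : Fin m₁ → Bool) (v : Fin m₂ → Bool),
        (if pchi S u = α then (1:ℝ) else 0) * (if pchi T v = β then (1:ℝ) else 0) * sgnb (g u v)
        = (1/4) * (sgnb (g u v) * chi ∅ u * chi ∅ v)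
          + (sgnb α / 4) * (sgnb (g u v) * chi S u * chi ∅ v)
          + (sgnb β / 4) * (sgnb (g u v) * chi ∅ u * chi T v)
          + (sgnb α * sgnb β / 4) * (sgnb (g u v) * chi S u * chi T v) := by
      intro u v
      rw [ind_pchi, ind_pchi, chi_empty, chi_empty]
      ring
    simp_rw [step, Finset.sum_add_distrib, ← Finset.mul_sum]
    rw [gFourier_sum g ∅ ∅, gFourier_sum g S ∅, gFourier_sum g ∅ T, gFourier_sum g S T]
    rw [hg ∅ ∅ (Or.inl rfl), hg S ∅ (Or.inr rfl), hg ∅ T (Or.inl rfl)]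
    ring
  · simp only [if_neg hc, mul_one]
    have hsum1 : ∑ u : Fin m₁ → Bool, (if pchi S u = α then (1:ℝ) else 0) = (2:ℝ)^m₁ / 2 := by
      simp_rw [ind_pchi]
      rw [← Finset.sum_div, Finset.sum_add_distrib, ← Finset.mul_sum, sum_chi_eq_zero hS]
      simp [Finset.card_univ]
    have hsum2 : ∑ v : Fin m₂ → Bool, (if pchi T v = β then (1:ℝ) else 0) = (2:ℝ)^m₂ / 2 := by
      simp_rw [ind_pchi]
      rw [← Finset.sum_div, Finset.sum_add_distrib, ← Finset.mul_sum, sum_chi_eq_zero hT]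
      simp [Finset.card_univ]
    rw [← Finset.sum_mul_sum, hsum1, hsum2]
    ring

lemma ind_bool (a b : Bool) : (if a = b then (1:ℝ) else 0) = (1 + sgnb a * sgnb b) / 2 := by
  cases a <;> cases b <;> norm_num [sgnb]

lemma sum3_swap {α β γ : Type*} [Fintype α] [Fintype β] [Fintype γ] (f : α → β → γ → ℝ) :
    ∑ a, ∑ b, ∑ c, f a b c = ∑ b, ∑ c, ∑ a, f a b c := by
  calc ∑ a, ∑ b, ∑ c, f a b c = ∑ b, ∑ a, ∑ c, f a b c := Finset.sum_comm
    _ = ∑ b, ∑ c, ∑ a, f a b c := Finset.sum_congr rfl fun b _ => Finset.sum_comm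

lemma sum_fun_prod2 {n : ℕ} {X Y : Type} [Fintype X] [DecidableEq X] [Fintype Y] [DecidableEq Y]
    (f : Fin n → X → Y → ℝ) :
    ∑ x : Fin n → X, ∑ y : Fin n → Y, ∏ i, f i (x i) (y i) = ∏ i, ∑ u : X, ∑ v : Y, f i u v := by
  have h1 : ∀ x : Fin n → X, ∑ y : Fin n → Y, ∏ i, f i (x i) (y i)
      = ∏ i, ∑ v : Y, f i (x i) v := fun x => sum_fun_prod (fun i v => f i (x i) v)
  simp_rw [h1]
  exact sum_fun_prod (fun i u => ∑ v : Y, f i u v)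

lemma prod_ite_univ {n : ℕ} (S : Finset (Fin n)) (f : Fin n → ℝ) :
    ∏ i ∈ S, f i = ∏ i, (if i ∈ S then f i else 1) := by
  rw [← Finset.prod_filter]
  congr 1
  simp [Finset.filter_mem_eq_inter]

lemma sum_G_zero {m₁ m₂ : ℕ} {g : (Fin m₁ → Bool) → (Fin m₂ → Bool) → Bool}
    (hg : BalancedGadget g) :
    ∑ u : Fin m₁ → Bool, ∑ v : Fin m₂ → Bool, sgnb (g u v) = 0 := by
  have h := gFourier_sum g ∅ ∅
  simp only [chi, Finset.prod_empty, mul_one] at h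
  rw [h, hg ∅ ∅ (Or.inl rfl), mul_zero]

lemma fiber_card {n m₁ m₂ : ℕ} {g : (Fin m₁ → Bool) → (Fin m₂ → Bool) → Bool}
    (hg : BalancedGadget g) (z : Fin n → Bool) :
    (((Finset.univ.filter
      (fun q : (Fin n → Fin m₁ → Bool) × (Fin n → Fin m₂ → Bool) =>
        ∀ i, g (q.1 i) (q.2 i) = z i)).card : ℝ)) = ((2:ℝ)^m₁ * (2:ℝ)^m₂ / 2)^n := by
  rw [Finset.card_filter]
  push_cast
  rw [Fintype.sum_prod_type]
  have h1 : ∀ (x : Fin n → Fin m₁ → Bool) (y : Fin n → Fin m₂ → Bool),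
      (if (∀ i, g (x i) (y i) = z i) then (1:ℝ) else 0)
        = ∏ i, if g (x i) (y i) = z i then (1:ℝ) else 0 := by
    intro x y; rw [Finset.prod_boole]; simp
  simp_rw [h1]
  rw [sum_fun_prod2 (fun i u v => if g u v = z i then (1:ℝ) else 0)]
  have h2 : ∀ i : Fin n,
      ∑ u : Fin m₁ → Bool, ∑ v : Fin m₂ → Bool, (if g u v = z i then (1:ℝ) else 0)
        = (2:ℝ)^m₁ * (2:ℝ)^m₂ / 2 := by
    intro i
    simp_rw [ind_bool, add_div, Finset.sum_add_distrib, mul_div_assoc, ← Finset.sum_mul]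
    rw [sum_G_zero hg, zero_mul, add_zero]
    simp [Finset.card_univ]
    ring
  rw [Finset.prod_congr rfl (fun i _ => h2 i), Finset.prod_const, Finset.card_univ,
    Fintype.card_fin]

lemma double_delta {A B : Type} [Fintype A] [DecidableEq A] [Fintype B] [DecidableEq B]
    (f : A → B → ℝ) (a₀ : A) (b₀ : B) :
    f a₀ b₀ = ∑ a : A, ∑ b : B, (if a₀ = a then (1:ℝ) else 0) * (if b₀ = b then (1:ℝ) else 0) * f a b := by
  simp [ite_mul, zero_mul, one_mul, Finset.sum_ite_eq]

lemma key_sum {n m₁ m₂ : ℕ} (g : (Fin m₁ → Bool) → (Fin m₂ → Bool) → Bool)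
    (C : (Fin n → Fin m₁ → Bool) → (Fin n → Fin m₂ → Bool) → ℝ) (U : Finset (Fin n)) :
    ∑ z : Fin n → Bool,
      (∑ x : Fin n → Fin m₁ → Bool, ∑ y : Fin n → Fin m₂ → Bool,
        if (∀ i, g (x i) (y i) = z i) then C x y else 0) * chi U z
    = ∑ x : Fin n → Fin m₁ → Bool, ∑ y : Fin n → Fin m₂ → Bool,
        C x y * chi U (fun i => g (x i) (y i)) := by
  simp_rw [Finset.sum_mul]
  rw [sum3_swap]
  apply Finset.sum_congr rfl; intro x _
  apply Finset.sum_congr rfl; intro y _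
  have h1 : ∀ z : Fin n → Bool,
      (if (∀ i, g (x i) (y i) = z i) then C x y else 0) * chi U z
      = if (fun i => g (x i) (y i)) = z then C x y * chi U z else 0 := by
    intro z
    rw [ite_mul, zero_mul]
    exact if_congr funext_iff.symm rfl rfl
  simp_rw [h1]
  rw [Finset.sum_ite_eq univ (fun i => g (x i) (y i)) (fun z => C x y * chi U z)]
  simp

lemma lifted_sum {n m₁ m₂ : ℕ} {g : (Fin m₁ → Bool) → (Fin m₂ → Bool) → Bool}
    (hg : BalancedGadget g) {S : Finset (Fin m₁)} {T : Finset (Fin m₂)}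
    (hS : S.Nonempty) (hT : T.Nonempty)
    (C' : (Fin n → Bool) → (Fin n → Bool) → ℝ) (U : Finset (Fin n)) :
    ∑ x : Fin n → Fin m₁ → Bool, ∑ y : Fin n → Fin m₂ → Bool,
        C' (fun i => pchi S (x i)) (fun i => pchi T (y i)) * chi U (fun i => g (x i) (y i))
    = ((2:ℝ)^m₁ * (2:ℝ)^m₂ / 4)^n * (gFourier g S T) ^ U.card *
        ∑ a : Fin n → Bool, ∑ b : Fin n → Bool,
          C' a b * ∏ i ∈ U, (sgnb (a i) * sgnb (b i)) := by
  have hdd : ∀ (x : Fin n → Fin m₁ → Bool) (y : Fin n → Fin m₂ → Bool),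
      C' (fun i => pchi S (x i)) (fun i => pchi T (y i)) * chi U (fun i => g (x i) (y i))
      = ∑ a : Fin n → Bool, ∑ b : Fin n → Bool,
          ((if (fun i => pchi S (x i)) = a then (1:ℝ) else 0) *
            (if (fun i => pchi T (y i)) = b then (1:ℝ) else 0) * C' a b)
            * chi U (fun i => g (x i) (y i)) := by
    intro x y
    conv_lhs => rw [double_delta C' (fun i => pchi S (x i)) (fun i => pchi T (y i))]
    rw [Finset.sum_mul]
    exact Finset.sum_congr rfl fun a _ => Finset.sum_mul _ _ _
  simp_rw [hdd]
  rw [sum4_swap]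
  have hK : ∀ (a b : Fin n → Bool),
      ∑ x : Fin n → Fin m₁ → Bool, ∑ y : Fin n → Fin m₂ → Bool,
        (((if (fun i => pchi S (x i)) = a then (1:ℝ) else 0) *
          (if (fun i => pchi T (y i)) = b then (1:ℝ) else 0) * C' a b)
          * chi U (fun i => g (x i) (y i)))
      = C' a b * (((2:ℝ)^m₁ * (2:ℝ)^m₂ / 4)^n * ((gFourier g S T) ^ U.card *
          ∏ i ∈ U, (sgnb (a i) * sgnb (b i)))) := by
    intro a b
    have hsummand : ∀ (x : Fin n → Fin m₁ → Bool) (y : Fin n → Fin m₂ → Bool),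
        (((if (fun i => pchi S (x i)) = a then (1:ℝ) else 0) *
          (if (fun i => pchi T (y i)) = b then (1:ℝ) else 0) * C' a b)
          * chi U (fun i => g (x i) (y i)))
        = C' a b * ∏ i, ((if pchi S (x i) = a i then (1:ℝ) else 0) *
            (if pchi T (y i) = b i then (1:ℝ) else 0) *
            (if i ∈ U then sgnb (g (x i) (y i)) else 1)) := by
      intro x y
      have e1 : (if (fun i => pchi S (x i)) = a then (1:ℝ) else 0)
          = ∏ i, (if pchi S (x i) = a i then (1:ℝ) else 0) := by
        by_cases h : (fun i => pchi S (x i)) = a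
        · rw [if_pos h]; symm
          exact Finset.prod_eq_one fun i _ => if_pos (congrFun h i)
        · rw [if_neg h]
          obtain ⟨i0, hi0⟩ : ∃ i, pchi S (x i) ≠ a i := by
            by_contra hc; push_neg at hc; exact h (funext hc)
          symm; exact Finset.prod_eq_zero (Finset.mem_univ i0) (if_neg hi0)
      have e2 : (if (fun i => pchi T (y i)) = b then (1:ℝ) else 0)
          = ∏ i, (if pchi T (y i) = b i then (1:ℝ) else 0) := by
        by_cases h : (fun i => pchi T (y i)) = b
        · rw [if_pos h]; symm
          exact Finset.prod_eq_one fun i _ => if_pos (congrFun h i)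
        · rw [if_neg h]
          obtain ⟨i0, hi0⟩ : ∃ i, pchi T (y i) ≠ b i := by
            by_contra hc; push_neg at hc; exact h (funext hc)
          symm; exact Finset.prod_eq_zero (Finset.mem_univ i0) (if_neg hi0)
      have e3 : chi U (fun i => g (x i) (y i))
          = ∏ i, (if i ∈ U then sgnb (g (x i) (y i)) else 1) :=
        prod_ite_univ U (fun i => sgnb (g (x i) (y i)))
      simp only [e1, e2, e3, Finset.prod_mul_distrib]
      ring
    simp_rw [hsummand, ← Finset.mul_sum]
    congr 1
    rw [sum_fun_prod2 (fun i u v => (if pchi S u = a i then (1:ℝ) else 0) *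
        (if pchi T v = b i then (1:ℝ) else 0) * (if i ∈ U then sgnb (g u v) else 1))]
    rw [Finset.prod_congr rfl (fun i _ => coord_sum hg hS hT (a i) (b i) (i ∈ U))]
    rw [Finset.prod_mul_distrib, Finset.prod_const, Finset.card_univ, Fintype.card_fin]
    congr 1
    rw [← prod_ite_univ U (fun i => sgnb (a i) * sgnb (b i) * gFourier g S T)]
    rw [Finset.prod_mul_distrib, Finset.prod_const, mul_comm]
  simp_rw [hK]
  have hre : ∀ (a b : Fin n → Bool),
      C' a b * (((2:ℝ)^m₁ * (2:ℝ)^m₂ / 4)^n * ((gFourier g S T) ^ U.card *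
          ∏ i ∈ U, (sgnb (a i) * sgnb (b i))))
      = ((2:ℝ)^m₁ * (2:ℝ)^m₂ / 4)^n * (gFourier g S T) ^ U.card *
          (C' a b * ∏ i ∈ U, (sgnb (a i) * sgnb (b i))) := by
    intro a b; ring
  simp_rw [hre, ← Finset.mul_sum]

lemma xorFiber_coeff {n : ℕ} (C' : (Fin n → Bool) → (Fin n → Bool) → ℝ) (U : Finset (Fin n)) :
    bFourier (xorFiber C') U
      = ((2:ℝ)^n)⁻¹ * ((2:ℝ)^n)⁻¹ *
        ∑ a : Fin n → Bool, ∑ b : Fin n → Bool,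
          C' a b * ∏ i ∈ U, (sgnb (a i) * sgnb (b i)) := by
  rw [bFourier]
  have h1 : ∀ z : Fin n → Bool, xorFiber C' z * ∏ i ∈ U, sgnb (z i)
      = ((2:ℝ)^n)⁻¹ * ∑ x : Fin n → Bool, (C' x (fun i => xor (x i) (z i)) * chi U z) := by
    intro z
    rw [xorFiber, mul_assoc, Finset.sum_mul]
    rfl
  simp_rw [h1, ← Finset.mul_sum, ← mul_assoc]
  congr 1
  rw [Finset.sum_comm]
  apply Finset.sum_congr rfl; intro x _
  have e : Function.Involutive (fun z : Fin n → Bool => fun i => xor (x i) (z i)) := by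
    intro z; funext i; simp
  apply Fintype.sum_equiv (e.toPerm _)
    (fun z => C' x (fun i => xor (x i) (z i)) * chi U z)
    (fun b => C' x b * ∏ i ∈ U, (sgnb (x i) * sgnb (b i)))
  intro z
  show (C' x fun i => xor (x i) (z i)) * chi U z
      = C' x (fun i => xor (x i) (z i)) * ∏ i ∈ U, (sgnb (x i) * sgnb (xor (x i) (z i)))
  congr 1
  rw [chi]
  apply Finset.prod_congr rfl
  intro i _
  rw [sgnb_xor, ← mul_assoc, sgnb_sq, one_mul]

lemma fiber_coeff {n m₁ m₂ : ℕ} {g : (Fin m₁ → Bool) → (Fin m₂ → Bool) → Bool}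
    (hg : BalancedGadget g) {S : Finset (Fin m₁)} {T : Finset (Fin m₂)}
    (hS : S.Nonempty) (hT : T.Nonempty)
    (C' : (Fin n → Bool) → (Fin n → Bool) → ℝ) (U : Finset (Fin n)) :
    bFourier (gFiber g (fun x y => C' (fun i => pchi S (x i)) (fun i => pchi T (y i)))) U
      = (gFourier g S T) ^ U.card * bFourier (xorFiber C') U := by
  rw [bFourier]
  have h1 : ∀ z : Fin n → Bool,
      gFiber g (fun x y => C' (fun i => pchi S (x i)) (fun i => pchi T (y i))) z
        * ∏ i ∈ U, sgnb (z i)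
      = ((∑ x : Fin n → Fin m₁ → Bool, ∑ y : Fin n → Fin m₂ → Bool,
          if ∀ i, g (x i) (y i) = z i
            then C' (fun i => pchi S (x i)) (fun i => pchi T (y i)) else 0) * chi U z)
          / (((2:ℝ)^m₁ * (2:ℝ)^m₂ / 2)^n) := by
    intro z
    rw [gFiber, fiber_card hg z, div_mul_eq_mul_div]
    rfl
  simp_rw [h1, ← Finset.sum_div]
  rw [key_sum g (fun x y => C' (fun i => pchi S (x i)) (fun i => pchi T (y i))) U]
  rw [lifted_sum hg hS hT C' U, xorFiber_coeff C' U]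
  have c2 : ((2:ℝ)^m₁ * (2:ℝ)^m₂ / 2)^n ≠ 0 := by positivity
  field_simp
  ring_nf
  rw [mul_assoc _ ((1/4:ℝ)^n) (2^n), show ((1/4:ℝ))^n * 2^n = (1/2)^n from by rw [← mul_pow]; norm_num]

namespace Protocol

def comap {A B A' B' : Type} (fa : A' → A) (fb : B' → B) : Protocol A B → Protocol A' B'
  | leaf o => leaf o
  | nodeA f l r => nodeA (fun a => f (fa a)) (comap fa fb l) (comap fa fb r)
  | nodeB f l r => nodeB (fun b => f (fb b)) (comap fa fb l) (comap fa fb r)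

lemma depth_comap {A B A' B' : Type} (fa : A' → A) (fb : B' → B) (P : Protocol A B) :
    (P.comap fa fb).depth = P.depth := by
  induction P with
  | leaf o => rfl
  | nodeA f l r ihl ihr => simp [comap, depth, ihl, ihr]
  | nodeB f l r ihl ihr => simp [comap, depth, ihl, ihr]

lemma eval_comap {A B A' B' : Type} (fa : A' → A) (fb : B' → B) (P : Protocol A B)
    (a : A') (b : B') : (P.comap fa fb).eval a b = P.eval (fa a) (fb b) := by
  induction P with
  | leaf o => rfl
  | nodeA f l r ihl ihr => simp [comap, eval, ihl, ihr]
  | nodeB f l r ihl ihr => simp [comap, eval, ihl, ihr]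
end Protocol

lemma bFourier_sub {n : ℕ} (f h : (Fin n → Bool) → ℝ) (U : Finset (Fin n)) :
    bFourier (fun z => f z - h z) U = bFourier f U - bFourier h U := by
  simp only [bFourier, sub_mul, Finset.sum_sub_distrib, mul_sub]

lemma abs_bFourier_le {n : ℕ} {f : (Fin n → Bool) → ℝ} {ε : ℝ}
    (hf : ∀ z, |f z| ≤ ε) (U : Finset (Fin n)) : |bFourier f U| ≤ ε := by
  have hε : 0 ≤ ε := le_trans (abs_nonneg _) (hf (fun _ => false))
  rw [bFourier, abs_mul, abs_inv, abs_pow]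
  have h2 : |(2:ℝ)| = 2 := by norm_num
  rw [h2]
  have hbound : |∑ z : Fin n → Bool, f z * ∏ i ∈ U, sgnb (z i)| ≤ (2:ℝ)^n * ε := by
    calc |∑ z : Fin n → Bool, f z * ∏ i ∈ U, sgnb (z i)|
        ≤ ∑ z : Fin n → Bool, |f z * ∏ i ∈ U, sgnb (z i)| := Finset.abs_sum_le_sum_abs _ _
      _ ≤ ∑ _z : Fin n → Bool, ε := by
          apply Finset.sum_le_sum
          intro z _
          rw [abs_mul]
          have := abs_chi U z
          rw [chi] at this
          rw [this, mul_one]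
          exact hf z
      _ = (2:ℝ)^n * ε := by
          rw [Finset.sum_const, Finset.card_univ]
          simp [nsmul_eq_mul]
  calc ((2:ℝ)^n)⁻¹ * |∑ z : Fin n → Bool, f z * ∏ i ∈ U, sgnb (z i)|
      ≤ ((2:ℝ)^n)⁻¹ * ((2:ℝ)^n * ε) := by
        apply mul_le_mul_of_nonneg_left hbound
        positivity
    _ = ε := by
        rw [← mul_assoc, inv_mul_cancel₀ (by positivity), one_mul]

lemma card_filter_card_eq {n k : ℕ} :
    (Finset.univ.filter (fun S : Finset (Fin n) => S.card = k)).card = n.choose k := by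
  rw [show Finset.univ.filter (fun S : Finset (Fin n) => S.card = k)
      = Finset.powersetCard k (Finset.univ : Finset (Fin n)) from ?_]
  · rw [Finset.card_powersetCard, Finset.card_univ, Fintype.card_fin]
  · ext S
    simp [Finset.mem_powersetCard]


/-- **Fourier growth of XOR-fibers from lifting theorems with a balanced
gadget.** Let `g` be a balanced gadget and suppose:
(i) every randomized protocol `C` of cost at most `d` on the `g`-lifted
domain admits a randomized decision tree of depth at most `D` computing
`C_{↓g}` within `n^{-k}` pointwise, and
(ii) every randomized decision tree of depth at most `D` on `{-1,1}^n` has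
level-`k` Fourier weight at most `B`.
Then every randomized protocol `C'` of cost at most `d` on
`{-1,1}^n × {-1,1}^n` satisfies
`L_{1,k}(C'_{↓XOR}) ≤ (max_{S,T} |ĝ(S,T)|)^{-k}·(B + C(n,k)·n^{-k})`. -/
theorem xor_fiber_growth_from_lifting
    (n m₁ m₂ k d D : ℕ) (hn : 1 ≤ n) (hk : 1 ≤ k)
    (g : (Fin m₁ → Bool) → (Fin m₂ → Bool) → Bool) (hg : BalancedGadget g)
    (B : ℝ)
    (hlift : ∀ (ι : Type) [Fintype ι] (p : ι → ℝ)
      (P : ι → Protocol (Fin n → Fin m₁ → Bool) (Fin n → Fin m₂ → Bool)),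
      (∀ i, 0 ≤ p i) → (∑ i, p i = 1) → (∀ i, (P i).depth ≤ d) →
      ∃ (s : ℕ) (q : Fin s → ℝ) (T : Fin s → DTree n),
        (∀ j, 0 ≤ q j) ∧ (∑ j, q j = 1) ∧
        (∀ j, (T j).depth ≤ D) ∧ (∀ j, (T j).boundedLeaves) ∧
        (∀ z : Fin n → Bool,
          |(∑ j, q j * (T j).eval z) - gFiber g (rvalue p P) z| ≤ ((n : ℝ) ^ k)⁻¹))
    (hdt : ∀ (s : ℕ) (q : Fin s → ℝ) (T : Fin s → DTree n),
      (∀ j, 0 ≤ q j) → (∑ j, q j = 1) →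
      (∀ j, (T j).depth ≤ D) → (∀ j, (T j).boundedLeaves) →
      levelWeight (fun z => ∑ j, q j * (T j).eval z) k ≤ B) :
    ∀ (ι : Type) [Fintype ι] (p : ι → ℝ)
      (P : ι → Protocol (Fin n → Bool) (Fin n → Bool)),
      (∀ i, 0 ≤ p i) → (∑ i, p i = 1) → (∀ i, (P i).depth ≤ d) →
      levelWeight (xorFiber (rvalue p P)) k
        ≤ ((⨆ q : Finset (Fin m₁) × Finset (Fin m₂), |gFourier g q.1 q.2|) ^ k)⁻¹ *
            (B + (n.choose k : ℝ) * ((n : ℝ) ^ k)⁻¹) := by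
  intro ι inst p P hp hp1 hd
  classical
  obtain ⟨q₀, hq₀⟩ := Finite.exists_max
    (fun q : Finset (Fin m₁) × Finset (Fin m₂) => |gFourier g q.1 q.2|)
  have hsup : (⨆ q : Finset (Fin m₁) × Finset (Fin m₂), |gFourier g q.1 q.2|)
      = |gFourier g q₀.1 q₀.2| :=
    le_antisymm (ciSup_le fun q => hq₀ q) (le_ciSup (f := fun q : Finset (Fin m₁) × Finset (Fin m₂) => |gFourier g q.1 q.2|) (Finite.bddAbove_range _) q₀)
  have hγpos : 0 < |gFourier g q₀.1 q₀.2| := by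
    obtain ⟨S', T', hne⟩ := exists_gFourier_ne_zero g
    exact lt_of_lt_of_le (abs_pos.mpr hne) (hq₀ (S', T'))
  have hgne : gFourier g q₀.1 q₀.2 ≠ 0 := fun h => by rw [h, abs_zero] at hγpos; exact lt_irrefl _ hγpos
  have hS : q₀.1.Nonempty := by
    rcases Finset.eq_empty_or_nonempty q₀.1 with h | h
    · exact absurd (hg q₀.1 q₀.2 (Or.inl h)) hgne
    · exact h
  have hT : q₀.2.Nonempty := by
    rcases Finset.eq_empty_or_nonempty q₀.2 with h | h
    · exact absurd (hg q₀.1 q₀.2 (Or.inr h)) hgne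
    · exact h
  obtain ⟨s, q, Tr, hq0, hq1, hdep, hbl, hclose⟩ :=
    hlift ι p (fun i => (P i).comap (fun x j => pchi q₀.1 (x j)) (fun y j => pchi q₀.2 (y j)))
      hp hp1 (fun i => by rw [Protocol.depth_comap]; exact hd i)
  have hCeq : (rvalue p (fun i => (P i).comap
        (fun (x : Fin n → Fin m₁ → Bool) j => pchi q₀.1 (x j))
        (fun (y : Fin n → Fin m₂ → Bool) j => pchi q₀.2 (y j))))
      = fun (x : Fin n → Fin m₁ → Bool) (y : Fin n → Fin m₂ → Bool) =>
          rvalue p P (fun j => pchi q₀.1 (x j)) (fun j => pchi q₀.2 (y j)) := by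
    funext x y
    exact Finset.sum_congr rfl fun i _ => by rw [Protocol.eval_comap]
  rw [hCeq] at hclose
  have hB := hdt s q Tr hq0 hq1 hdep hbl
  have hcoeff : ∀ U : Finset (Fin n), U.card = k →
      |bFourier (xorFiber (rvalue p P)) U| * |gFourier g q₀.1 q₀.2| ^ k
        ≤ |bFourier (fun z => ∑ j, q j * (Tr j).eval z) U| + ((n:ℝ)^k)⁻¹ := by
    intro U hU
    have hfc := fiber_coeff hg hS hT (rvalue p P) U
    have h2 : |bFourier (fun z => ∑ j, q j * (Tr j).eval z) U
        - bFourier (gFiber g (fun x y => rvalue p P (fun j => pchi q₀.1 (x j)) (fun j => pchi q₀.2 (y j)))) U|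
        ≤ ((n:ℝ)^k)⁻¹ := by
      rw [← bFourier_sub]
      exact abs_bFourier_le (fun z => hclose z) U
    have h1 : |bFourier (xorFiber (rvalue p P)) U| * |gFourier g q₀.1 q₀.2| ^ k
        = |bFourier (gFiber g (fun x y => rvalue p P (fun j => pchi q₀.1 (x j)) (fun j => pchi q₀.2 (y j)))) U| := by
      rw [hfc, abs_mul, abs_pow, hU, mul_comm]
    rw [h1]
    have h3 : bFourier (gFiber g (fun x y => rvalue p P (fun j => pchi q₀.1 (x j)) (fun j => pchi q₀.2 (y j)))) U
        = bFourier (fun z => ∑ j, q j * (Tr j).eval z) U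
          - (bFourier (fun z => ∑ j, q j * (Tr j).eval z) U
            - bFourier (gFiber g (fun x y => rvalue p P (fun j => pchi q₀.1 (x j)) (fun j => pchi q₀.2 (y j)))) U) := by
      ring
    rw [h3]
    exact le_trans (abs_sub _ _) (add_le_add_right h2 _)
  rw [hsup]
  have hγk : (0:ℝ) < |gFourier g q₀.1 q₀.2| ^ k := pow_pos hγpos k
  rw [inv_mul_eq_div, le_div_iff₀ hγk]
  calc levelWeight (xorFiber (rvalue p P)) k * |gFourier g q₀.1 q₀.2| ^ k
      = ∑ U ∈ Finset.univ.filter (fun S : Finset (Fin n) => S.card = k),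
          |bFourier (xorFiber (rvalue p P)) U| * |gFourier g q₀.1 q₀.2| ^ k := by
        rw [levelWeight, Finset.sum_mul]
    _ ≤ ∑ U ∈ Finset.univ.filter (fun S : Finset (Fin n) => S.card = k),
          (|bFourier (fun z => ∑ j, q j * (Tr j).eval z) U| + ((n:ℝ)^k)⁻¹) :=
        Finset.sum_le_sum fun U hU => hcoeff U (by simpa using hU)
    _ = levelWeight (fun z => ∑ j, q j * (Tr j).eval z) k
        + ((Finset.univ.filter (fun S : Finset (Fin n) => S.card = k)).card : ℝ) * ((n:ℝ)^k)⁻¹ := by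
        rw [Finset.sum_add_distrib, Finset.sum_const, levelWeight, nsmul_eq_mul]
    _ ≤ B + (n.choose k : ℝ) * ((n:ℝ)^k)⁻¹ := by
        rw [card_filter_card_eq]
        exact add_le_add_left hB _
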